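/- arXiv:1301.0303 — 2 statements merged into one kernel-verified Lean document; each statement's English description precedes it below -/
import Mathlib

section
/- For every positive integer n, the sum of φ(i)² for i from 1 to n is at least n³/11, where φ is Euler's totient function. -/
/-!
Möbius inversion of `∑_{d ∣ n} φ(d) = n` gives `∑_{n ≤ N} φ(n) = ∑_{d ≤ N} μ(d) T(⌊N/d⌋)` with
`T(q) = q(q+1)/2`. Comparing `T(⌊N/d⌋)` with `N²/(2d²)` and using `∑_d μ(d)/d² = 1/ζ(2) = 6/π²`
gives `∑_{n ≤ N} φ(n) ≥ (3/π²) N² - (N/2)(2 + log N)`. Cauchy–Schwarz on the window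
`n/6 < i ≤ n`, where the totients still sum to about `(3/π² - 1/72) n²`, yields
`∑_{i ≤ n} φ(i)² ≥ n³/11` for `n ≥ 300`; smaller `n` are checked by computation.
-/

open Finset Real
open scoped ArithmeticFunction.Moebius

theorem moebius_mul_id_apply {n : ℕ} (hn : 0 < n) :
    ((μ : ArithmeticFunction ℝ) * ((ArithmeticFunction.id : ArithmeticFunction ℕ) :
      ArithmeticFunction ℝ)) n = n.totient := by
  have h := (ArithmeticFunction.sum_eq_iff_sum_mul_moebius_eq (R := ℝ)
    (f := fun n ↦ (n.totient : ℝ)) (g := fun n ↦ (n : ℝ))).1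
    (fun n _ ↦ by exact_mod_cast Nat.sum_totient n) n hn
  simpa [ArithmeticFunction.mul_apply] using h

theorem sum_Ioc_totient_eq_sum_moebius (N : ℕ) :
    ∑ n ∈ Ioc 0 N, (n.totient : ℝ) =
      ∑ d ∈ Ioc 0 N, (μ d : ℝ) * ∑ m ∈ Ioc 0 (N / d), (m : ℝ) := by
  rw [← sum_congr rfl fun n hn ↦ moebius_mul_id_apply (mem_Ioc.1 hn).1,
    ArithmeticFunction.sum_Ioc_mul_eq_sum_sum]
  simp

theorem sum_Ioc_natCast_eq (q : ℕ) : ∑ m ∈ Ioc 0 q, (m : ℝ) = q * (q + 1) / 2 := by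
  induction q with
  | zero => simp
  | succ q ih =>
    rw [sum_Ioc_succ_top (Nat.zero_le q), ih]
    push_cast
    ring

theorem abs_sum_Ioc_floor_sub_sq_le {x : ℝ} (hx : 0 ≤ x) :
    |∑ m ∈ Ioc 0 ⌊x⌋₊, (m : ℝ) - x ^ 2 / 2| ≤ x / 2 := by
  have h₁ := Nat.floor_le hx
  have h₂ := Nat.lt_floor_add_one x
  rw [sum_Ioc_natCast_eq, abs_le]
  constructor <;> nlinarith

theorem abs_sum_Ioc_totient_sub_le (N : ℕ) :
    |∑ n ∈ Ioc 0 N, (n.totient : ℝ) - N ^ 2 / 2 * ∑ d ∈ Ioc 0 N, (μ d : ℝ) / d ^ 2|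
      ≤ N / 2 * ∑ d ∈ Ioc 0 N, (1 : ℝ) / d := by
  rw [sum_Ioc_totient_eq_sum_moebius, mul_sum, mul_sum, ← sum_sub_distrib]
  refine (abs_sum_le_sum_abs _ _).trans (sum_le_sum fun d _ ↦ ?_)
  have hμ : |(μ d : ℝ)| ≤ 1 := by exact_mod_cast ArithmeticFunction.abs_moebius_le_one
  calc |(μ d : ℝ) * ∑ m ∈ Ioc 0 (N / d), (m : ℝ) - N ^ 2 / 2 * ((μ d : ℝ) / d ^ 2)|
      = |(μ d : ℝ)| * |∑ m ∈ Ioc 0 ⌊(N / d : ℝ)⌋₊, (m : ℝ) - (N / d : ℝ) ^ 2 / 2| := by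
        rw [Nat.floor_div_natCast, Nat.floor_natCast, ← abs_mul]
        ring_nf
    _ ≤ 1 * ((N / d : ℝ) / 2) :=
        mul_le_mul hμ (abs_sum_Ioc_floor_sub_sq_le (by positivity)) (abs_nonneg _) zero_le_one
    _ = N / 2 * (1 / d) := by ring

theorem tsum_moebius_div_sq : ∑' n : ℕ, (μ n : ℝ) / n ^ 2 = 6 / π ^ 2 := by
  have h := ArithmeticFunction.LSeries_zeta_mul_Lseries_moebius (s := 2) (by norm_num)
  rw [ArithmeticFunction.LSeries_zeta_eq_riemannZeta (by norm_num), riemannZeta_two] at h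
  have hL : LSeries (fun n ↦ (μ n : ℂ)) 2 = ((6 / π ^ 2 : ℝ) : ℂ) := by
    push_cast
    rw [eq_div_iff (by exact_mod_cast (pow_pos pi_pos 2).ne')]
    linear_combination 6 * h
  rw [LSeries] at hL
  apply Complex.ofReal_injective
  rw [Complex.ofReal_tsum, ← hL]
  refine tsum_congr fun n ↦ ?_
  rcases eq_or_ne n 0 with rfl | hn
  · simp
  · simp [LSeries.term_of_ne_zero hn, Complex.cpow_ofNat]

theorem tsum_one_div_sq_nat_add_le {N : ℕ} (hN : 0 < N) :
    ∑' k : ℕ, 1 / ((k + (N + 1) : ℕ) : ℝ) ^ 2 ≤ 1 / (N : ℝ) := by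
  refine Real.tsum_le_of_sum_range_le (fun _ ↦ by positivity) fun K ↦ ?_
  rw [range_eq_Ico, sum_Ico_add' (fun i : ℕ ↦ 1 / (i : ℝ) ^ 2), zero_add, ← add_assoc,
    Ico_add_one_add_one_eq_Ioc]
  have hK : (0 : ℝ) ≤ ((K + N : ℕ) : ℝ)⁻¹ := by positivity
  simpa only [one_div] using (sum_Ioc_inv_sq_le_sub hN.ne' (Nat.le_add_left N K)).trans
    (sub_le_self _ hK)

theorem le_sum_Ioc_moebius_div_sq {N : ℕ} (hN : 0 < N) :
    6 / π ^ 2 - 1 / N ≤ ∑ d ∈ Ioc 0 N, (μ d : ℝ) / d ^ 2 := by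
  set f : ℕ → ℝ := fun n ↦ (μ n : ℝ) / n ^ 2
  have hf_norm : ∀ n, ‖f n‖ ≤ 1 / n ^ 2 := fun n ↦ by
    have hμ : |(μ n : ℝ)| ≤ 1 := by exact_mod_cast ArithmeticFunction.abs_moebius_le_one
    rw [Real.norm_eq_abs, abs_div, abs_of_nonneg (by positivity : (0 : ℝ) ≤ n ^ 2)]
    exact div_le_div_of_nonneg_right hμ (by positivity)
  have hsq : Summable fun n : ℕ ↦ 1 / (n : ℝ) ^ 2 := Real.summable_one_div_nat_pow.2 one_lt_two
  have hsum : Summable f := .of_norm_bounded hsq hf_norm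
  have htail : ∑' k, f (k + (N + 1)) ≤ 1 / N :=
    (Summable.tsum_le_tsum (fun k ↦ (Real.le_norm_self _).trans (hf_norm (k + (N + 1))))
      ((summable_nat_add_iff (N + 1)).2 hsum)
      ((summable_nat_add_iff (f := fun n : ℕ ↦ 1 / (n : ℝ) ^ 2) (N + 1)).2 hsq)).trans
      (tsum_one_div_sq_nat_add_le hN)
  have hhead : ∑ k ∈ range (N + 1), f k = ∑ d ∈ Ioc 0 N, f d := by
    rw [range_eq_Ico, sum_eq_sum_Ico_succ_bot (Nat.succ_pos N), Nat.succ_eq_add_one,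
      Ico_add_one_add_one_eq_Ioc]
    simp [f]
  rw [← tsum_moebius_div_sq, ← hsum.sum_add_tsum_nat_add (N + 1), hhead]
  linarith

theorem sum_Ioc_one_div_le_one_add_log (N : ℕ) : ∑ d ∈ Ioc 0 N, (1 : ℝ) / d ≤ 1 + log N := by
  have h := harmonic_le_one_add_log N
  rw [harmonic_eq_sum_Icc] at h
  rw [show Icc 1 N = Ioc 0 N from Icc_add_one_left_eq_Ioc 0 N] at h
  simpa using h

theorem le_sum_Ioc_totient {N : ℕ} (hN : 0 < N) :
    3 / π ^ 2 * N ^ 2 - N / 2 * (2 + log N) ≤ ∑ n ∈ Ioc 0 N, (n.totient : ℝ) := by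
  have hdiff := (abs_le.1 (abs_sum_Ioc_totient_sub_le N)).1
  have hμ := mul_le_mul_of_nonneg_left (le_sum_Ioc_moebius_div_sq hN)
    (by positivity : (0 : ℝ) ≤ N ^ 2 / 2)
  have hharm := mul_le_mul_of_nonneg_left (sum_Ioc_one_div_le_one_add_log N)
    (by positivity : (0 : ℝ) ≤ N / 2)
  have hN' : (N : ℝ) ≠ 0 := by positivity
  have hexpand : (N : ℝ) ^ 2 / 2 * (6 / π ^ 2 - 1 / N) = 3 / π ^ 2 * N ^ 2 - N / 2 := by
    field_simp
    ring
  linarith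

theorem sum_Ioc_totient_le (m : ℕ) : ∑ n ∈ Ioc 0 m, (n.totient : ℝ) ≤ m * (m + 1) / 2 := by
  rw [← sum_Ioc_natCast_eq]
  gcongr
  exact_mod_cast Nat.totient_le _

theorem log_le_five_add_div {x : ℝ} (hx : 0 < x) : log x ≤ 5 + x / 300 := by
  have hexp : (300 : ℝ) ≤ exp 6 := by
    have h : exp 6 = exp 1 ^ 6 := by rw [← exp_nat_mul]; norm_num
    rw [h]
    exact le_trans (by norm_num) (pow_le_pow_left₀ (by norm_num) exp_one_gt_d9.le 6)
  have htangent := log_le_sub_one_of_pos (div_pos hx (exp_pos 6))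
  rw [log_div hx.ne' (exp_pos 6).ne', log_exp] at htangent
  have : x / exp 6 ≤ x / 300 := div_le_div_of_nonneg_left hx.le (by norm_num) hexp
  linarith

theorem sq_sum_Ioc_le_sub_mul_sum_Ioc_sq (f : ℕ → ℝ) {m n : ℕ} (hmn : m ≤ n) :
    (∑ i ∈ Ioc m n, f i) ^ 2 ≤ (n - m) * ∑ i ∈ Ioc 0 n, f i ^ 2 := by
  calc (∑ i ∈ Ioc m n, f i) ^ 2 ≤ #(Ioc m n) * ∑ i ∈ Ioc m n, f i ^ 2 :=
        sq_sum_le_card_mul_sum_sq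
    _ ≤ (n - m) * ∑ i ∈ Ioc 0 n, f i ^ 2 := by
        rw [Nat.card_Ioc, Nat.cast_sub hmn]
        gcongr
        · exact sub_nonneg.2 (Nat.cast_le.2 hmn)
        · exact Nat.zero_le m

theorem cube_le_eleven_mul_sum_Ioc_totient_sq_of_le {n : ℕ} (hn : 300 ≤ n) :
    (n : ℝ) ^ 3 ≤ 11 * ∑ i ∈ Ioc 0 n, (i.totient : ℝ) ^ 2 := by
  set m := n / 6
  have hm : (6 * m : ℝ) ≤ n ∧ (n : ℝ) ≤ 6 * m + 5 := by
    constructor <;> norm_cast <;> omega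
  have hn' : (300 : ℝ) ≤ n := by exact_mod_cast hn
  have hmn : m ≤ n := Nat.div_le_self n 6
  have hπ : 0.3039 ≤ 3 / π ^ 2 := by
    rw [le_div_iff₀ (by positivity)]
    nlinarith [pi_lt_d4, pi_pos]
  have hlog := log_le_five_add_div (by positivity : (0 : ℝ) < n)
  -- `0.2883 < 0.3039 - 1/600 - 1/72`: the terms come from `3/π²`, `log n ≤ 5 + n/300`, `m ≤ n/6`
  have hwindow : 0.2883 * n ^ 2 - 3.6 * n ≤ ∑ i ∈ Ioc m n, (i.totient : ℝ) := by
    have hlow := le_sum_Ioc_totient (by omega : 0 < n)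
    have hup := sum_Ioc_totient_le m
    rw [← sum_Ioc_consecutive _ (Nat.zero_le m) hmn] at hlow
    nlinarith
  have hcs := sq_sum_Ioc_le_sub_mul_sum_Ioc_sq (fun i ↦ (i.totient : ℝ)) hmn
  have hpoly : (n : ℝ) * (n - m) ≤ 11 * (0.2883 * n - 3.6) ^ 2 := by nlinarith
  have hgap : (0 : ℝ) < n - m := by linarith
  refine le_of_mul_le_mul_right ?_ hgap
  calc (n : ℝ) ^ 3 * (n - m) = (n : ℝ) ^ 2 * (n * (n - m)) := by ring
    _ ≤ (n : ℝ) ^ 2 * (11 * (0.2883 * n - 3.6) ^ 2) := by gcongr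
    _ = 11 * (0.2883 * (n : ℝ) ^ 2 - 3.6 * n) ^ 2 := by ring
    _ ≤ 11 * (∑ i ∈ Ioc m n, (i.totient : ℝ)) ^ 2 := by
        gcongr
        nlinarith
    _ ≤ 11 * ((n - m) * ∑ i ∈ Ioc 0 n, (i.totient : ℝ) ^ 2) := by gcongr
    _ = (11 * ∑ i ∈ Ioc 0 n, (i.totient : ℝ) ^ 2) * (n - m) := by ring

theorem cube_le_eleven_mul_sum_totient_sq_of_lt {n : ℕ} (hn : n < 300) :
    n ^ 3 ≤ 11 * ∑ i ∈ Icc 1 n, i.totient ^ 2 := by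
  revert n
  decide +kernel

theorem totient_sq_sum_lower_bound_general (n : ℕ) :
    (n : ℝ) ^ 3 / 11 ≤ ∑ i ∈ Finset.Icc 1 n, (Nat.totient i : ℝ) ^ 2 := by
  rw [div_le_iff₀' (by norm_num)]
  rcases lt_or_ge n 300 with hsmall | hlarge
  · exact_mod_cast cube_le_eleven_mul_sum_totient_sq_of_lt hsmall
  · rw [show Icc 1 n = Ioc 0 n from Icc_add_one_left_eq_Ioc 0 n]
    exact cube_le_eleven_mul_sum_Ioc_totient_sq_of_le hlarge

/-- For every positive integer `n`, `∑_{i=1}^n φ(i)² ≥ n³/11`. -/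
theorem totient_sq_sum_lower_bound (n : ℕ) (hn : 0 < n) :
    (n : ℝ) ^ 3 / 11 ≤ ∑ i ∈ Finset.Icc 1 n, (Nat.totient i : ℝ) ^ 2 :=
  totient_sq_sum_lower_bound_general n
end

section
/- There exists a constant c > 0 such that for all integers k ≥ 2, the sum over i from 1 to k of φ(i)²/i³ is at least c · log k, where φ is Euler's totient function. -/
/-!
Summing `∑_{d ∣ m} φ d = m` over `m ≤ N` gives `∑_{d ≤ N} φ d ⌊N / d⌋ = N (N + 1) / 2`, hence
`∑_{d ≤ N} φ d / d ≥ N / 2`, and since `x² ≥ x - 1/4` also `T N := ∑_{d ≤ N} (φ d / d)² ≥ N / 4`.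
With the trivial `T N ≤ N` this gives `T (8n) - T n ≥ n`, so each block `(n, 8n]` contributes at
least `1/8` to `∑ φ(i)² / i³ = ∑ (φ i / i)² / i`. The `log k / log 8` blocks `(8^j, 8^(j+1)]` below
`k` give the bound.
-/

open Finset Nat

namespace Nat

theorem sum_Ioc_totient_mul_div (N : ℕ) : ∑ n ∈ Ioc 0 N, φ n * (N / n) = ∑ n ∈ Ioc 0 N, n := by
  let totientFun : ArithmeticFunction ℕ := ⟨φ, totient_zero⟩
  have key := ArithmeticFunction.sum_Ioc_mul_zeta_eq_sum totientFun N
  simp only [ArithmeticFunction.coe_mul_zeta_apply, Nat.cast_id] at key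
  exact key.symm.trans (sum_congr rfl fun n _ => sum_totient n)

theorem sum_Ioc_id_mul_two (N : ℕ) : (∑ n ∈ Ioc 0 N, n) * 2 = N * (N + 1) := by
  induction N with
  | zero => simp
  | succ N ih => rw [sum_Ioc_succ_top N.zero_le, add_mul, ih]; ring

theorem half_le_sum_Ioc_totient_div (N : ℕ) : (N : ℝ) / 2 ≤ ∑ n ∈ Ioc 0 N, (φ n : ℝ) / n := by
  rcases N.eq_zero_or_pos with rfl | hN
  · simp
  have hN' : (0 : ℝ) < N := by exact_mod_cast hN
  have gauss : (N : ℝ) * (N + 1) / 2 = ∑ n ∈ Ioc 0 N, (φ n : ℝ) * (N / n : ℕ) := by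
    rw [div_eq_iff two_ne_zero]
    exact_mod_cast (sum_Ioc_totient_mul_div N ▸ sum_Ioc_id_mul_two N).symm
  have floor_le : ∑ n ∈ Ioc 0 N, (φ n : ℝ) * (N / n : ℕ) ≤ N * ∑ n ∈ Ioc 0 N, (φ n : ℝ) / n := by
    rw [mul_sum]
    refine sum_le_sum fun n _ => ?_
    calc (φ n : ℝ) * (N / n : ℕ) ≤ φ n * (N / n) := by gcongr; exact cast_div_le
      _ = N * (φ n / n) := by ring
  have key : (N : ℝ) * (N / 2) ≤ N * ∑ n ∈ Ioc 0 N, (φ n : ℝ) / n :=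
    calc (N : ℝ) * (N / 2) ≤ N * (N + 1) / 2 := by linarith
      _ ≤ N * ∑ n ∈ Ioc 0 N, (φ n : ℝ) / n := gauss.trans_le floor_le
  exact le_of_mul_le_mul_left key hN'

theorem quarter_le_sum_Ioc_totient_div_sq (N : ℕ) :
    (N : ℝ) / 4 ≤ ∑ n ∈ Ioc 0 N, ((φ n : ℝ) / n) ^ 2 := by
  have pointwise : ∀ x : ℝ, x - 1 / 4 ≤ x ^ 2 := fun x => by nlinarith [sq_nonneg (x - 1 / 2)]
  calc (N : ℝ) / 4 = N / 2 - N * (1 / 4) := by ring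
    _ ≤ ∑ n ∈ Ioc 0 N, (φ n : ℝ) / n - N * (1 / 4) := by gcongr; exact half_le_sum_Ioc_totient_div N
    _ = ∑ n ∈ Ioc 0 N, ((φ n : ℝ) / n - 1 / 4) := by simp [sum_sub_distrib]
    _ ≤ ∑ n ∈ Ioc 0 N, ((φ n : ℝ) / n) ^ 2 := sum_le_sum fun n _ => pointwise _

theorem sum_Ioc_totient_div_sq_le (N : ℕ) : ∑ n ∈ Ioc 0 N, ((φ n : ℝ) / n) ^ 2 ≤ N := by
  calc ∑ n ∈ Ioc 0 N, ((φ n : ℝ) / n) ^ 2 ≤ ∑ _n ∈ Ioc 0 N, (1 : ℝ) := by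
        refine sum_le_sum fun n _ => pow_le_one₀ (by positivity) (div_le_one_of_le₀ ?_ (by positivity))
        exact_mod_cast totient_le n
    _ = N := by simp

theorem one_div_eight_le_sum_Ioc_totient_sq_div_cube {n : ℕ} (hn : 0 < n) :
    1 / 8 ≤ ∑ i ∈ Ioc n (8 * n), (φ i : ℝ) ^ 2 / i ^ 3 := by
  have hn' : (0 : ℝ) < n := by exact_mod_cast hn
  have block : (n : ℝ) ≤ ∑ i ∈ Ioc n (8 * n), ((φ i : ℝ) / i) ^ 2 := by
    have lower := quarter_le_sum_Ioc_totient_div_sq (8 * n)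
    have upper := sum_Ioc_totient_div_sq_le n
    rw [← sum_Ioc_consecutive _ n.zero_le (by omega)] at lower
    push_cast at lower
    linarith
  calc (1 : ℝ) / 8 ≤ (∑ i ∈ Ioc n (8 * n), ((φ i : ℝ) / i) ^ 2) / (8 * n) := by
        rw [le_div_iff₀ (by positivity)]; linarith
    _ = ∑ i ∈ Ioc n (8 * n), ((φ i : ℝ) / i) ^ 2 / (8 * n) := sum_div ..
    _ ≤ ∑ i ∈ Ioc n (8 * n), (φ i : ℝ) ^ 2 / i ^ 3 := by
        refine sum_le_sum fun i hi => ?_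
        obtain ⟨hni, hi8n⟩ := mem_Ioc.1 hi
        have hi_pos : (0 : ℝ) < i := by exact_mod_cast hn.trans hni
        have hi_le : (i : ℝ) ≤ 8 * n := by exact_mod_cast hi8n
        rw [div_pow, div_div, show (i : ℝ) ^ 3 = i ^ 2 * i by ring]
        gcongr

theorem succ_div_eight_le_sum_Ioc_totient_sq_div_cube (J : ℕ) :
    ((J : ℝ) + 1) / 8 ≤ ∑ i ∈ Ioc 0 (8 ^ J), (φ i : ℝ) ^ 2 / i ^ 3 := by
  induction J with
  | zero => norm_num
  | succ J ih =>
    have hpos : 0 < 8 ^ J := by positivity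
    rw [pow_succ', ← sum_Ioc_consecutive _ (zero_le _) (by omega : 8 ^ J ≤ 8 * 8 ^ J)]
    have block := one_div_eight_le_sum_Ioc_totient_sq_div_cube hpos
    push_cast
    linarith

end Nat

/-- There is a constant `c > 0` such that for all `k ≥ 2`,
`∑_{i=1}^k φ(i)²/i³ ≥ c · log k`. -/
theorem totient_sq_over_cube_sum_lower_bound :
    ∃ c : ℝ, 0 < c ∧ ∀ k : ℕ, 2 ≤ k →
      c * Real.log k ≤ ∑ i ∈ Finset.Icc 1 k, (Nat.totient i : ℝ) ^ 2 / (i : ℝ) ^ 3 := by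
  have hlog8 : 0 < Real.log 8 := Real.log_pos (by norm_num)
  refine ⟨1 / (8 * Real.log 8), by positivity, fun k hk => ?_⟩
  set J := Nat.log 8 k
  have hlogk : Real.log k ≤ (J + 1) * Real.log 8 := by
    rw [← Nat.cast_succ, ← Real.log_pow]
    refine Real.log_le_log (by positivity) ?_
    exact_mod_cast (Nat.lt_pow_succ_log_self (by norm_num) k).le
  calc 1 / (8 * Real.log 8) * Real.log k ≤ ((J : ℝ) + 1) / 8 := by
        rw [div_mul_eq_mul_div, one_mul, div_le_div_iff₀ (by positivity) (by norm_num)]; linarith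
    _ ≤ ∑ i ∈ Ioc 0 (8 ^ J), (φ i : ℝ) ^ 2 / i ^ 3 := succ_div_eight_le_sum_Ioc_totient_sq_div_cube J
    _ ≤ ∑ i ∈ Icc 1 k, (φ i : ℝ) ^ 2 / i ^ 3 := by
        rw [← Icc_add_one_left_eq_Ioc, zero_add]
        exact sum_le_sum_of_subset_of_nonneg (Icc_subset_Icc_right (Nat.pow_log_le_self 8 (by omega)))
          fun _ _ _ => by positivity
end
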